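/- Consider the dual ascent iteration ξ_{l+1} = M⁻¹(c − L̄λ_l), λ_{l+1} = λ_l + α L̄ ξ_{l+1}, where M is symmetric positive definite block diagonal, L̄ = L ⊗ Iₙ for the Laplacian L of a connected undirected graph, c ∈ ℝ^{Nn}, and 0 < α < 2/(σ_max(L)² ‖M⁻¹‖). Then λ_l converges to λ∞ = λ* + (U₁U₁ᵀ ⊗ Iₙ)(λ₀ − λ*), where λ* is any KKT dual solution and U₁ = (1/√N)1_N; and ξ_l converges to the unique primal solution ξ* of minimizing ½ξᵀMξ − cᵀξ subject to L̄ξ = 0. -/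

import Mathlib

/-!
With `e_l = λ_l - λ*`, the KKT conditions turn the iteration into `e_{l+1} = (1 - α S) e_l` for
`S = L̄ M⁻¹ L̄`, a positive semidefinite matrix with eigenvalues in `[0, σ_max(L)² ‖M⁻¹‖]`.
Diagonalising `S`, the step-size condition makes every factor `1 - α μ` with `μ ≠ 0` a strict
contraction, so `(1 - α S)^l` tends to the projection `P` onto `ker S`, and `1 - P = S S⁺` has
range inside `range L̄`. As `M⁻¹` is positive definite, `ker S = ker L̄`, which for a connected
graph consists of the vectors whose `N` blocks coincide. Averaging the blocks fixes `ker L̄` and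
kills `range L̄` (the columns of `L` sum to zero), so `P e₀` is the block average of `e₀`.
The primal iterates then converge by continuity, and the objective is strictly convex on `ker L̄`.
-/

open Matrix Kronecker Filter Topology

namespace Matrix

theorem IsSymm.kronecker {R V κ : Type*} [Mul R] {A : Matrix V V R} {B : Matrix κ κ R}
    (hA : A.IsSymm) (hB : B.IsSymm) : (A ⊗ₖ B).IsSymm := by
  rw [IsSymm, ← kroneckerMap_transpose, hA.eq, hB.eq]

variable {V : Type*} [Fintype V]

theorem IsSymm.dotProduct_mulVec_comm {R : Type*} [CommSemiring R] {A : Matrix V V R}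
    (hA : A.IsSymm) (x y : V → R) : x ⬝ᵥ (A *ᵥ y) = y ⬝ᵥ (A *ᵥ x) := by
  rw [dotProduct_mulVec, ← mulVec_transpose, hA.eq, dotProduct_comm]

theorem IsSymm.dotProduct_mul_mul_mulVec {B : Matrix V V ℝ} (hB : B.IsSymm) (P : Matrix V V ℝ)
    (x : V → ℝ) : x ⬝ᵥ ((B * P * B) *ᵥ x) = (B *ᵥ x) ⬝ᵥ (P *ᵥ (B *ᵥ x)) := by
  rw [← mulVec_mulVec, ← mulVec_mulVec, hB.dotProduct_mulVec_comm, dotProduct_comm]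

theorem IsSymm.dotProduct_mul_mul_mulVec_le {B P : Matrix V V ℝ} (hB : B.IsSymm) {b p : ℝ}
    (hBb : ∀ x, (B *ᵥ x) ⬝ᵥ (B *ᵥ x) ≤ b * (x ⬝ᵥ x))
    (hPp : ∀ x, x ⬝ᵥ (P *ᵥ x) ≤ p * (x ⬝ᵥ x)) (hp : 0 ≤ p) (x : V → ℝ) :
    x ⬝ᵥ ((B * P * B) *ᵥ x) ≤ b * p * (x ⬝ᵥ x) :=
  calc x ⬝ᵥ ((B * P * B) *ᵥ x) ≤ p * ((B *ᵥ x) ⬝ᵥ (B *ᵥ x)) := by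
        rw [hB.dotProduct_mul_mul_mulVec]
        exact hPp _
    _ ≤ p * (b * (x ⬝ᵥ x)) := by gcongr; exact hBb x
    _ = b * p * (x ⬝ᵥ x) := by ring

theorem PosSemidef.dotProduct_mulVec_sq_le {A : Matrix V V ℝ} (hA : A.PosSemidef) (x y : V → ℝ) :
    (x ⬝ᵥ (A *ᵥ y)) ^ 2 ≤ (x ⬝ᵥ (A *ᵥ x)) * (y ⬝ᵥ (A *ᵥ y)) := by
  have hsymm := isHermitian_iff_isSymm.1 hA.1
  have hquad : ∀ t : ℝ,
      0 ≤ (y ⬝ᵥ (A *ᵥ y)) * (t * t) + 2 * (x ⬝ᵥ (A *ᵥ y)) * t + x ⬝ᵥ (A *ᵥ x) := by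
    intro t
    have := hA.dotProduct_mulVec_nonneg (x + t • y)
    rw [star_trivial, mulVec_add, mulVec_smul, dotProduct_add, add_dotProduct, add_dotProduct,
      dotProduct_smul, smul_dotProduct, smul_dotProduct, dotProduct_smul,
      hsymm.dotProduct_mulVec_comm y x] at this
    simp only [smul_eq_mul] at this
    linarith
  have := discrim_le_zero hquad
  rw [discrim] at this
  linarith

-- Cauchy–Schwarz for the form of `A`, applied to `x` and `A x`.
theorem PosSemidef.mulVec_dotProduct_mulVec_le {A : Matrix V V ℝ} (hA : A.PosSemidef) {s : ℝ}
    (hs : ∀ x, x ⬝ᵥ (A *ᵥ x) ≤ s * (x ⬝ᵥ x)) (x : V → ℝ) :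
    (A *ᵥ x) ⬝ᵥ (A *ᵥ x) ≤ s ^ 2 * (x ⬝ᵥ x) := by
  set y := A *ᵥ x
  have hcs := hA.dotProduct_mulVec_sq_le x y
  rw [(isHermitian_iff_isSymm.1 hA.1).dotProduct_mulVec_comm x y] at hcs
  have hx := hA.dotProduct_mulVec_nonneg x
  have hy := hA.dotProduct_mulVec_nonneg y
  simp only [star_trivial] at hx hy
  have hyy : 0 ≤ y ⬝ᵥ y := dotProduct_self_star_nonneg y
  rcases hyy.eq_or_lt with h0 | hpos
  · rw [← h0]
    have := dotProduct_self_star_nonneg x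
    positivity
  · have : (y ⬝ᵥ y) ^ 2 ≤ s ^ 2 * (x ⬝ᵥ x) * (y ⬝ᵥ y) :=
      calc (y ⬝ᵥ y) ^ 2 ≤ (x ⬝ᵥ (A *ᵥ x)) * (y ⬝ᵥ (A *ᵥ y)) := hcs
        _ ≤ (s * (x ⬝ᵥ x)) * (s * (y ⬝ᵥ y)) := mul_le_mul (hs x) (hs y) hy (hx.trans (hs x))
        _ = s ^ 2 * (x ⬝ᵥ x) * (y ⬝ᵥ y) := by ring
    nlinarith

theorem PosDef.mulVec_eq_zero_of_mul_mul_mulVec_eq_zero {B P : Matrix V V ℝ} (hB : B.IsSymm)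
    (hP : P.PosDef) {x : V → ℝ} (hx : (B * P * B) *ᵥ x = 0) : B *ᵥ x = 0 := by
  have h := hB.dotProduct_mul_mul_mulVec P x
  rw [hx, dotProduct_zero] at h
  by_contra hne
  have := hP.dotProduct_mulVec_pos hne
  rw [star_trivial] at this
  linarith

variable [DecidableEq V]

theorem IsHermitian.eigenvalues_le {A : Matrix V V ℝ} (hA : A.IsHermitian) {s : ℝ}
    (hs : ∀ x, x ⬝ᵥ (A *ᵥ x) ≤ s * (x ⬝ᵥ x)) (j : V) : hA.eigenvalues j ≤ s := by
  set v := hA.eigenvectorBasis j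
  have hv : v.ofLp ⬝ᵥ v.ofLp = 1 := by
    have := real_inner_self_eq_norm_sq v
    rw [hA.eigenvectorBasis.orthonormal.1 j, EuclideanSpace.inner_eq_star_dotProduct,
      star_trivial] at this
    simpa using this
  have := hs v.ofLp
  rwa [hA.mulVec_eigenvectorBasis, dotProduct_smul, smul_eq_mul, hv, mul_one, mul_one] at this

/-- The limit `1 - S * Q` is the projection onto `ker S`: `Q` is the pseudo-inverse of `S`,
obtained by inverting its eigenvalues with the convention `0⁻¹ = 0`. -/
theorem PosSemidef.tendsto_pow_one_sub_smul {S : Matrix V V ℝ} (hS : S.PosSemidef)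
    {α s : ℝ} (hα : 0 < α) (hs : ∀ x, x ⬝ᵥ (S *ᵥ x) ≤ s * (x ⬝ᵥ x)) (hαs : α * s < 2) :
    ∃ Q : Matrix V V ℝ, S * (1 - S * Q) = 0 ∧
      Tendsto (fun l => (1 - α • S) ^ l) atTop (𝓝 (1 - S * Q)) := by
  set μ := hS.1.eigenvalues
  have hμ : ∀ j, 0 ≤ μ j ∧ α * μ j < 2 := fun j =>
    ⟨hS.eigenvalues_nonneg j, by nlinarith [hS.1.eigenvalues_le hs j]⟩
  set U := hS.1.eigenvectorUnitary
  set C := Unitary.conjStarAlgAut ℝ (Matrix V V ℝ) U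
  have hSC : S = C (diagonal μ) := by
    simpa only [RCLike.ofReal_real_eq_id, Function.id_comp] using hS.1.spectral_theorem
  have hP : 1 - S * C (diagonal μ⁻¹) = C (diagonal (1 - μ * μ⁻¹)) := by
    rw [hSC, ← map_mul, ← map_one C, ← map_sub, diagonal_mul_diagonal, ← diagonal_one,
      diagonal_sub]
    rfl
  have hpow : ∀ l : ℕ, (1 - α • S) ^ l = C (diagonal ((1 - α • μ) ^ l)) := by
    intro l
    rw [hSC, ← diagonal_pow, map_pow, ← map_smul, ← map_one C, ← map_sub, ← diagonal_one,
      ← diagonal_smul, diagonal_sub]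
    rfl
  refine ⟨C (diagonal μ⁻¹), ?_, ?_⟩
  · have : μ * (1 - μ * μ⁻¹) = 0 := by
      funext j
      by_cases h : μ j = 0 <;> simp [h]
    rw [hP, hSC, ← map_mul, diagonal_mul_diagonal, ← map_zero C, ← diagonal_zero]
    exact congrArg (C ∘ diagonal) this
  · have hC : Continuous C := by
      have : ⇑C = fun X => (U : Matrix V V ℝ) * X * star (U : Matrix V V ℝ) :=
        funext fun X => Unitary.conjStarAlgAut_apply U X
      rw [this]
      fun_prop
    simp only [hpow, hP]
    refine (hC.comp continuous_id.matrix_diagonal).tendsto _ |>.comp (tendsto_pi_nhds.2 fun j => ?_)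
    by_cases h : μ j = 0
    · simp [h]
    · have h0 : 0 < μ j := (hμ j).1.lt_of_ne' h
      have : |1 - α * μ j| < 1 := abs_lt.2 ⟨by linarith [(hμ j).2], by nlinarith⟩
      simpa [h] using tendsto_pow_atTop_nhds_zero_of_abs_lt_one this

end Matrix

section Laplacian

variable {V : Type*} [Fintype V] [DecidableEq V]

def weightedLaplacian (a : Matrix V V ℝ) : Matrix V V ℝ := diagonal (a *ᵥ 1) - a

variable {a : Matrix V V ℝ}

theorem eq_weightedLaplacian {L : Matrix V V ℝ} (hdiag : ∀ i, a i i = 0)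
    (hL : ∀ i j, L i j = if i = j then ∑ k, a i k else -(a i j)) : L = weightedLaplacian a := by
  ext i j
  by_cases h : i = j
  · subst h
    simp [hL, weightedLaplacian, mulVec, dotProduct, hdiag]
  · simp [hL, weightedLaplacian, h]

theorem weightedLaplacian_mulVec_one (a : Matrix V V ℝ) : weightedLaplacian a *ᵥ 1 = 0 := by
  ext i
  simp [weightedLaplacian, sub_mulVec, mulVec_diagonal]

theorem weightedLaplacian_isSymm (ha : a.IsSymm) : (weightedLaplacian a).IsSymm := by
  simp [weightedLaplacian, IsSymm, ha.eq]

theorem one_vecMul_weightedLaplacian (ha : a.IsSymm) : 1 ᵥ* weightedLaplacian a = 0 := by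
  rw [← mulVec_transpose, (weightedLaplacian_isSymm ha).eq, weightedLaplacian_mulVec_one]

theorem dotProduct_weightedLaplacian_mulVec (ha : a.IsSymm) (x : V → ℝ) :
    x ⬝ᵥ (weightedLaplacian a *ᵥ x) = (∑ i, ∑ j, a i j * (x i - x j) ^ 2) / 2 := by
  have hswap : ∑ i, ∑ j, a i j * x j ^ 2 = ∑ i, ∑ j, a i j * x i ^ 2 := by
    rw [Finset.sum_comm]
    simp_rw [ha.apply]
  have hexpand : ∑ i, ∑ j, a i j * (x i - x j) ^ 2 =
      ∑ i, ∑ j, a i j * x i ^ 2 + ∑ i, ∑ j, a i j * x j ^ 2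
        - 2 * ∑ i, ∑ j, x i * (a i j * x j) := by
    simp only [Finset.mul_sum, ← Finset.sum_add_distrib, ← Finset.sum_sub_distrib]
    exact Finset.sum_congr rfl fun i _ => Finset.sum_congr rfl fun j _ => by ring
  have hdiag : x ⬝ᵥ (diagonal (a *ᵥ 1) *ᵥ x) = ∑ i, ∑ j, a i j * x i ^ 2 := by
    simp only [dotProduct, mulVec_diagonal]
    simp only [mulVec, dotProduct, Pi.one_apply, mul_one, Finset.sum_mul, Finset.mul_sum]
    exact Finset.sum_congr rfl fun i _ => Finset.sum_congr rfl fun j _ => by ring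
  have hoff : x ⬝ᵥ (a *ᵥ x) = ∑ i, ∑ j, x i * (a i j * x j) := by
    simp only [dotProduct, mulVec, Finset.mul_sum]
  rw [hexpand, hswap, weightedLaplacian, sub_mulVec, dotProduct_sub, hdiag, hoff]
  ring

theorem weightedLaplacian_posSemidef (ha : a.IsSymm) (hnn : ∀ i j, 0 ≤ a i j) :
    (weightedLaplacian a).PosSemidef := by
  refine .of_dotProduct_mulVec_nonneg (weightedLaplacian_isSymm ha) fun x => ?_
  rw [star_trivial, dotProduct_weightedLaplacian_mulVec ha]
  have : 0 ≤ ∑ i, ∑ j, a i j * (x i - x j) ^ 2 :=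
    Finset.sum_nonneg fun i _ => Finset.sum_nonneg fun j _ => mul_nonneg (hnn i j) (sq_nonneg _)
  positivity

theorem eq_of_weightedLaplacian_mulVec_eq_zero_of_pos (ha : a.IsSymm) (hnn : ∀ i j, 0 ≤ a i j)
    {x : V → ℝ} (hx : weightedLaplacian a *ᵥ x = 0) {i j : V} (hij : 0 < a i j) : x i = x j := by
  have hsum : ∑ i, ∑ j, a i j * (x i - x j) ^ 2 = 0 := by
    have := dotProduct_weightedLaplacian_mulVec ha x
    rw [hx, dotProduct_zero] at this
    linarith
  have hterm : a i j * (x i - x j) ^ 2 = 0 := by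
    have hnn' : ∀ i j, 0 ≤ a i j * (x i - x j) ^ 2 := fun i j => by have := hnn i j; positivity
    rw [Finset.sum_eq_zero_iff_of_nonneg fun i _ => Finset.sum_nonneg fun j _ => hnn' i j] at hsum
    exact (Finset.sum_eq_zero_iff_of_nonneg fun j _ => hnn' i j).1 (hsum i (Finset.mem_univ _)) j
      (Finset.mem_univ _)
  have := (mul_eq_zero.1 hterm).resolve_left hij.ne'
  linarith [pow_eq_zero_iff (n := 2) two_ne_zero |>.1 this]

theorem eq_of_weightedLaplacian_mulVec_eq_zero (ha : a.IsSymm) (hnn : ∀ i j, 0 ≤ a i j)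
    (hconn : ∀ i j, Relation.ReflTransGen (fun p q => 0 < a p q) i j)
    {x : V → ℝ} (hx : weightedLaplacian a *ᵥ x = 0) (i j : V) : x i = x j := by
  induction hconn i j with
  | refl => rfl
  | tail _ hpos ih => exact ih.trans (eq_of_weightedLaplacian_mulVec_eq_zero_of_pos ha hnn hx hpos)

end Laplacian

section Blocks

variable {V κ : Type*} [Fintype V]

/-- The matrix `(U₁U₁ᵀ ⊗ Iₙ)` of the paper, acting on vectors indexed by `V × κ`. -/
noncomputable def blockAverage (x : V × κ → ℝ) : V × κ → ℝ :=
  fun p => (Fintype.card V : ℝ)⁻¹ * ∑ j, x (j, p.2)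

theorem blockAverage_add (x y : V × κ → ℝ) :
    blockAverage (x + y) = blockAverage x + blockAverage y := by
  ext p
  simp [blockAverage, Finset.sum_add_distrib, mul_add]

theorem blockAverage_eq_self {x : V × κ → ℝ} (hx : ∀ i j k, x (i, k) = x (j, k)) :
    blockAverage x = x := by
  ext ⟨i, k⟩
  have : Nonempty V := ⟨i⟩
  have : (Fintype.card V : ℝ) ≠ 0 := Nat.cast_ne_zero.2 Fintype.card_ne_zero
  simp [blockAverage, hx _ i k, this]

variable [Fintype κ]

theorem dotProduct_eq_sum_slices (x y : V × κ → ℝ) :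
    x ⬝ᵥ y = ∑ k, (fun i => x (i, k)) ⬝ᵥ (fun i => y (i, k)) := by
  simp only [dotProduct, Fintype.sum_prod_type]
  exact Finset.sum_comm

variable [DecidableEq κ]

theorem kronecker_one_mulVec_apply (A : Matrix V V ℝ) (x : V × κ → ℝ) (i : V) (k : κ) :
    ((A ⊗ₖ (1 : Matrix κ κ ℝ)) *ᵥ x) (i, k) = (A *ᵥ fun j => x (j, k)) i := by
  simp [mulVec, dotProduct, Fintype.sum_prod_type, one_apply]

theorem kronecker_one_mulVec_dotProduct_le {A : Matrix V V ℝ} {s : ℝ}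
    (hA : ∀ y, (A *ᵥ y) ⬝ᵥ (A *ᵥ y) ≤ s * (y ⬝ᵥ y)) (x : V × κ → ℝ) :
    ((A ⊗ₖ (1 : Matrix κ κ ℝ)) *ᵥ x) ⬝ᵥ ((A ⊗ₖ (1 : Matrix κ κ ℝ)) *ᵥ x) ≤ s * (x ⬝ᵥ x) := by
  simp only [dotProduct_eq_sum_slices x x, dotProduct_eq_sum_slices (_ *ᵥ x),
    kronecker_one_mulVec_apply, Finset.mul_sum]
  exact Finset.sum_le_sum fun k _ => hA _

theorem blockAverage_kronecker_one_mulVec {A : Matrix V V ℝ} (hA : 1 ᵥ* A = 0) (x : V × κ → ℝ) :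
    blockAverage ((A ⊗ₖ (1 : Matrix κ κ ℝ)) *ᵥ x) = 0 := by
  ext p
  have : ∑ i, (A *ᵥ fun j => x (j, p.2)) i = 0 := by
    rw [← one_dotProduct, dotProduct_mulVec, hA, zero_dotProduct]
  simp [blockAverage, kronecker_one_mulVec_apply, this]

theorem blockAverage_add_weightedLaplacian_kronecker_mulVec [DecidableEq V] {a : Matrix V V ℝ}
    (ha : a.IsSymm) (hnn : ∀ i j, 0 ≤ a i j)
    (hconn : ∀ i j, Relation.ReflTransGen (fun p q => 0 < a p q) i j) {w : V × κ → ℝ}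
    (hw : (weightedLaplacian a ⊗ₖ (1 : Matrix κ κ ℝ)) *ᵥ w = 0) (z : V × κ → ℝ) :
    blockAverage (w + (weightedLaplacian a ⊗ₖ (1 : Matrix κ κ ℝ)) *ᵥ z) = w := by
  rw [blockAverage_add, blockAverage_kronecker_one_mulVec (one_vecMul_weightedLaplacian ha),
    add_zero]
  refine blockAverage_eq_self fun i j k => ?_
  refine eq_of_weightedLaplacian_mulVec_eq_zero ha hnn hconn (x := fun i => w (i, k)) ?_ i j
  ext i
  rw [← kronecker_one_mulVec_apply, hw]
  rfl

end Blocks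

theorem posDef_of_blocks {V κ : Type*} [Fintype V] [Fintype κ] [DecidableEq V]
    {M : V → Matrix κ κ ℝ} (hM : ∀ i, (M i).PosDef) :
    (of fun p q : V × κ => if p.1 = q.1 then M p.1 p.2 q.2 else 0).PosDef := by
  set Mb := of fun p q : V × κ => if p.1 = q.1 then M p.1 p.2 q.2 else 0
  have hquad : ∀ x, x ⬝ᵥ (Mb *ᵥ x) = ∑ i, (fun k => x (i, k)) ⬝ᵥ (M i *ᵥ fun k => x (i, k)) := by
    intro x
    simp [Mb, dotProduct, mulVec, Fintype.sum_prod_type, ite_mul]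
  refine .of_dotProduct_mulVec_pos ?_ fun x hx => ?_
  · refine isHermitian_iff_isSymm.2 (IsSymm.ext fun ⟨i, k⟩ ⟨j, l⟩ => ?_)
    by_cases h : i = j
    · subst h
      simp [Mb, (isHermitian_iff_isSymm.1 (hM i).1).apply]
    · simp [Mb, h, Ne.symm h]
  · obtain ⟨p, hp⟩ := Function.ne_iff.1 hx
    have hslice : (fun k => x (p.1, k)) ≠ 0 := fun h => hp (congrFun h p.2)
    rw [star_trivial, hquad]
    refine Finset.sum_pos' (fun i _ => ?_) ⟨p.1, Finset.mem_univ _, ?_⟩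
    · simpa using (hM i).posSemidef.dotProduct_mulVec_nonneg (fun k => x (i, k))
    · simpa using (hM p.1).dotProduct_mulVec_pos hslice

section DualAscent

variable {V : Type*} [Fintype V] [DecidableEq V] {M B : Matrix V V ℝ} {c ξs lams : V → ℝ}

theorem dual_ascent_error_succ (hM : IsUnit M.det) (hKKT1 : M *ᵥ ξs + B *ᵥ lams = c)
    (hKKT2 : B *ᵥ ξs = 0) (α : ℝ) (lam : V → ℝ) :
    lam + α • (B *ᵥ (M⁻¹ *ᵥ (c - B *ᵥ lam))) - lams
      = (1 - α • (B * M⁻¹ * B)) *ᵥ (lam - lams) := by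
  have hres : c - B *ᵥ lam = M *ᵥ ξs - B *ᵥ (lam - lams) := by
    rw [← hKKT1, mulVec_sub]
    abel
  rw [hres, mulVec_sub, mulVec_mulVec, nonsing_inv_mul M hM, one_mulVec, mulVec_sub, hKKT2,
    sub_mulVec, one_mulVec, smul_mulVec, ← mulVec_mulVec, ← mulVec_mulVec]
  module

theorem dual_ascent_tendsto (hM : M.PosDef) (hB : B.IsSymm) {α s : ℝ} (hα : 0 < α)
    (hs : ∀ x, x ⬝ᵥ ((B * M⁻¹ * B) *ᵥ x) ≤ s * (x ⬝ᵥ x)) (hαs : α * s < 2)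
    (hKKT1 : M *ᵥ ξs + B *ᵥ lams = c) (hKKT2 : B *ᵥ ξs = 0) {lam : ℕ → V → ℝ}
    (hiter : ∀ l, lam (l + 1) = lam l + α • (B *ᵥ (M⁻¹ *ᵥ (c - B *ᵥ lam l)))) :
    ∃ w z, B *ᵥ w = 0 ∧ lam 0 - lams = w + B *ᵥ z ∧ Tendsto lam atTop (𝓝 (lams + w)) := by
  set S := B * M⁻¹ * B
  have hS : S.PosSemidef := by
    have := hM.inv.posSemidef.mul_mul_conjTranspose_same B
    rwa [conjTranspose_eq_transpose_of_trivial, hB.eq] at this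
  obtain ⟨Q, hSQ, hpow⟩ := hS.tendsto_pow_one_sub_smul hα hs hαs
  set e₀ := lam 0 - lams
  have herr : ∀ l, lam l - lams = (1 - α • S) ^ l *ᵥ e₀ := by
    intro l
    induction l with
    | zero => simp [e₀]
    | succ l ih =>
      rw [hiter, dual_ascent_error_succ ((isUnit_iff_isUnit_det M).1 hM.isUnit) hKKT1 hKKT2, ih,
        pow_succ', ← mulVec_mulVec]
  refine ⟨(1 - S * Q) *ᵥ e₀, (M⁻¹ * B * Q) *ᵥ e₀, ?_, ?_, ?_⟩
  · refine hM.inv.mulVec_eq_zero_of_mul_mul_mulVec_eq_zero hB ?_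
    rw [mulVec_mulVec]
    exact (congrArg (· *ᵥ e₀) hSQ).trans (zero_mulVec e₀)
  · simp only [S, sub_mulVec, one_mulVec, mulVec_mulVec, Matrix.mul_assoc]
    abel
  · rw [funext fun l => eq_add_of_sub_eq' (herr l)]
    exact (((continuous_id.matrix_mulVec continuous_const).tendsto _).comp hpow).const_add lams

theorem tendsto_primal_of_tendsto_dual (hM : IsUnit M.det) (hKKT1 : M *ᵥ ξs + B *ᵥ lams = c)
    {w : V → ℝ} (hw : B *ᵥ w = 0) {ξ lam : ℕ → V → ℝ}
    (hiter : ∀ l, ξ (l + 1) = M⁻¹ *ᵥ (c - B *ᵥ lam l))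
    (hlam : Tendsto lam atTop (𝓝 (lams + w))) : Tendsto ξ atTop (𝓝 ξs) := by
  have hlim : M⁻¹ *ᵥ (c - B *ᵥ (lams + w)) = ξs := by
    rw [mulVec_add, hw, add_zero, ← hKKT1, add_sub_cancel_right, mulVec_mulVec,
      nonsing_inv_mul _ hM, one_mulVec]
  rw [← tendsto_add_atTop_iff_nat 1, funext hiter, ← hlim]
  exact ((continuous_const.matrix_mulVec (continuous_const.sub
    (continuous_const.matrix_mulVec continuous_id))).tendsto _).comp hlam

end DualAscent

theorem quadratic_lt_of_kkt {V m : Type*} [Fintype V] [Fintype m] {M : Matrix V V ℝ}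
    (hM : M.PosDef) {B : Matrix m V ℝ} {c ξ ζ : V → ℝ} {μ : m → ℝ}
    (hKKT1 : M *ᵥ ξ + Bᵀ *ᵥ μ = c) (hKKT2 : B *ᵥ ξ = 0) (hζ : B *ᵥ ζ = 0) (hne : ζ ≠ ξ) :
    (1 / 2) * (ξ ⬝ᵥ (M *ᵥ ξ)) - c ⬝ᵥ ξ < (1 / 2) * (ζ ⬝ᵥ (M *ᵥ ζ)) - c ⬝ᵥ ζ := by
  set d := ζ - ξ
  have hd : B *ᵥ d = 0 := by rw [mulVec_sub, hζ, hKKT2, sub_zero]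
  have hpos : 0 < d ⬝ᵥ (M *ᵥ d) := by
    have := hM.dotProduct_mulVec_pos (sub_ne_zero.2 hne)
    rwa [star_trivial] at this
  have hsymm := isHermitian_iff_isSymm.1 hM.1
  have hc : c ⬝ᵥ d = ξ ⬝ᵥ (M *ᵥ d) := by
    rw [← hKKT1, add_dotProduct, dotProduct_comm (Bᵀ *ᵥ μ), dotProduct_mulVec, vecMul_transpose,
      hd, zero_dotProduct, add_zero, dotProduct_comm, hsymm.dotProduct_mulVec_comm]
  have hζd : ζ = ξ + d := by simp [d]
  rw [hζd, mulVec_add, dotProduct_add, add_dotProduct, add_dotProduct, dotProduct_add, hc,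
    hsymm.dotProduct_mulVec_comm d ξ]
  linarith

theorem dual_ascent_convergence_general {N n : ℕ}
    (a L : Matrix (Fin N) (Fin N) ℝ)
    (hsym : ∀ i j, a i j = a j i)
    (hnn : ∀ i j, 0 ≤ a i j)
    (hdiag : ∀ i, a i i = 0)
    (hconn : ∀ i j : Fin N, Relation.ReflTransGen (fun p q => 0 < a p q) i j)
    (hL : ∀ i j, L i j = if i = j then ∑ k, a i k else -(a i j))
    (σN : ℝ) (hσN : ∀ x : Fin N → ℝ, x ⬝ᵥ (L *ᵥ x) ≤ σN * (x ⬝ᵥ x))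
    (M : Fin N → Matrix (Fin n) (Fin n) ℝ) (hM : ∀ i, (M i).PosDef)
    (Mb : Matrix (Fin N × Fin n) (Fin N × Fin n) ℝ)
    (hMb : ∀ p q, Mb p q = if p.1 = q.1 then M p.1 p.2 q.2 else 0)
    (mB : ℝ) (hmB : ∀ x : Fin N × Fin n → ℝ, x ⬝ᵥ (Mb⁻¹ *ᵥ x) ≤ mB * (x ⬝ᵥ x))
    (Lb : Matrix (Fin N × Fin n) (Fin N × Fin n) ℝ)
    (hLb : Lb = L ⊗ₖ (1 : Matrix (Fin n) (Fin n) ℝ))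
    (c : Fin N × Fin n → ℝ)
    (α : ℝ) (hα : 0 < α) (hαstep : α < 2 / (σN ^ 2 * mB))
    (ξ lam : ℕ → Fin N × Fin n → ℝ)
    (hiter1 : ∀ l, ξ (l + 1) = Mb⁻¹ *ᵥ (c - Lb *ᵥ lam l))
    (hiter2 : ∀ l, lam (l + 1) = lam l + α • (Lb *ᵥ ξ (l + 1)))
    (ξs lams : Fin N × Fin n → ℝ)
    (hKKT1 : Mb *ᵥ ξs + Lb *ᵥ lams = c)
    (hKKT2 : Lb *ᵥ ξs = 0) :
    Filter.Tendsto lam Filter.atTop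
      (nhds (lams + fun p => (N : ℝ)⁻¹ * ∑ j, (lam 0 (j, p.2) - lams (j, p.2)))) ∧
    Filter.Tendsto ξ Filter.atTop (nhds ξs) ∧
    (∀ ζ : Fin N × Fin n → ℝ, Lb *ᵥ ζ = 0 → ζ ≠ ξs →
      (1 / 2) * (ξs ⬝ᵥ (Mb *ᵥ ξs)) - c ⬝ᵥ ξs
        < (1 / 2) * (ζ ⬝ᵥ (Mb *ᵥ ζ)) - c ⬝ᵥ ζ) := by
  have ha : a.IsSymm := IsSymm.ext fun i j => hsym j i
  obtain rfl : L = weightedLaplacian a := eq_weightedLaplacian hdiag hL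
  subst hLb
  have hLbsymm := (weightedLaplacian_isSymm ha).kronecker (isSymm_one (n := Fin n))
  have hMbPD : Mb.PosDef := (Matrix.ext hMb : Mb = _) ▸ posDef_of_blocks hM
  have hσmB : 0 < σN ^ 2 * mB := (div_pos_iff_of_pos_left two_pos).1 (hα.trans hαstep)
  have hSbound := hLbsymm.dotProduct_mul_mul_mulVec_le
    (kronecker_one_mulVec_dotProduct_le
      ((weightedLaplacian_posSemidef ha hnn).mulVec_dotProduct_mulVec_le hσN))
    hmB (pos_of_mul_pos_right hσmB (sq_nonneg σN)).le
  obtain ⟨w, z, hw, hsplit, hlam⟩ := dual_ascent_tendsto hMbPD hLbsymm hα hSbound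
    ((lt_div_iff₀ hσmB).1 hαstep) hKKT1 hKKT2 (lam := lam) fun l => by rw [hiter2, hiter1]
  refine ⟨?_, tendsto_primal_of_tendsto_dual ((isUnit_iff_isUnit_det Mb).1 hMbPD.isUnit) hKKT1 hw
    hiter1 hlam, fun ζ hζ hne => quadratic_lt_of_kkt hMbPD (hLbsymm.eq ▸ hKKT1) hKKT2 hζ hne⟩
  convert hlam using 3
  rw [← blockAverage_add_weightedLaplacian_kronecker_mulVec ha hnn hconn hw z, ← hsplit]
  ext p
  simp [blockAverage]

/-- Lemma 2: the dual ascent iteration `ξ_{l+1} = M⁻¹(c − L̄λ_l)`,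
`λ_{l+1} = λ_l + αL̄ξ_{l+1}` with step size `0 < α < 2/(σ_max(L)²‖M⁻¹‖)` satisfies:
`λ_l → λ* + (U₁U₁ᵀ ⊗ Iₙ)(λ₀ − λ*)`, and `ξ_l` converges to the unique primal
solution `ξ*` of `min ½ξᵀMξ − cᵀξ s.t. L̄ξ = 0`. -/
theorem dual_ascent_convergence {N n : ℕ} (hN : 0 < N)
    (a L : Matrix (Fin N) (Fin N) ℝ)
    (hsym : ∀ i j, a i j = a j i)
    (hnn : ∀ i j, 0 ≤ a i j)
    (hdiag : ∀ i, a i i = 0)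
    (hconn : ∀ i j : Fin N, Relation.ReflTransGen (fun p q => 0 < a p q) i j)
    (hL : ∀ i j, L i j = if i = j then ∑ k, a i k else -(a i j))
    (σN : ℝ) (hσN : ∀ x : Fin N → ℝ, x ⬝ᵥ (L *ᵥ x) ≤ σN * (x ⬝ᵥ x)) (hσpos : 0 < σN)
    (M : Fin N → Matrix (Fin n) (Fin n) ℝ) (hM : ∀ i, (M i).PosDef)
    (Mb : Matrix (Fin N × Fin n) (Fin N × Fin n) ℝ)
    (hMb : ∀ p q, Mb p q = if p.1 = q.1 then M p.1 p.2 q.2 else 0)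
    (mB : ℝ) (hmB : ∀ x : Fin N × Fin n → ℝ, x ⬝ᵥ (Mb⁻¹ *ᵥ x) ≤ mB * (x ⬝ᵥ x))
    (hmBpos : 0 < mB)
    (Lb : Matrix (Fin N × Fin n) (Fin N × Fin n) ℝ)
    (hLb : Lb = L ⊗ₖ (1 : Matrix (Fin n) (Fin n) ℝ))
    (c : Fin N × Fin n → ℝ)
    (α : ℝ) (hα : 0 < α) (hαstep : α < 2 / (σN ^ 2 * mB))
    (ξ lam : ℕ → Fin N × Fin n → ℝ)
    (hiter1 : ∀ l, ξ (l + 1) = Mb⁻¹ *ᵥ (c - Lb *ᵥ lam l))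
    (hiter2 : ∀ l, lam (l + 1) = lam l + α • (Lb *ᵥ ξ (l + 1)))
    (ξs lams : Fin N × Fin n → ℝ)
    (hKKT1 : Mb *ᵥ ξs + Lb *ᵥ lams = c)
    (hKKT2 : Lb *ᵥ ξs = 0) :
    Filter.Tendsto lam Filter.atTop
      (nhds (lams + fun p => (N : ℝ)⁻¹ * ∑ j, (lam 0 (j, p.2) - lams (j, p.2)))) ∧
    Filter.Tendsto ξ Filter.atTop (nhds ξs) ∧
    (∀ ζ : Fin N × Fin n → ℝ, Lb *ᵥ ζ = 0 → ζ ≠ ξs →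
      (1 / 2) * (ξs ⬝ᵥ (Mb *ᵥ ξs)) - c ⬝ᵥ ξs
        < (1 / 2) * (ζ ⬝ᵥ (Mb *ᵥ ζ)) - c ⬝ᵥ ζ) :=
  dual_ascent_convergence_general a L hsym hnn hdiag hconn hL σN hσN M hM Mb hMb mB hmB Lb hLb c α
    hα hαstep ξ lam hiter1 hiter2 ξs lams hKKT1 hKKT2
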